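/- The kernel of the map Ψ : 𝒮 → R' presenting the monomial multi-Rees algebra 𝓡_in is generated, as an ideal of 𝒮, by homogeneous binomials of degree 2, i.e., by elements of the form Z_1 − Z_2 where Z_1 and Z_2 are degree-2 monomials of 𝒮 with Ψ(Z_1) = Ψ(Z_2) (with respect to the standard grading on 𝒮 in which every variable has degree 1). -/

import Mathlib

open MvPolynomial

/-- The `t`-minor of the generic `m × n` matrix of indeterminates, viewed inside the
polynomial ring with variable set `(Fin m × Fin n) ⊕ σ`: rows `1,…,t` and columns `c`. -/
noncomputable def minorX (K : Type*) [Field K] (m n : ℕ) (σ : Type*) {t : ℕ}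
    (c : Fin t → Fin n) : MvPolynomial ((Fin m × Fin n) ⊕ σ) K :=
  Matrix.det (Matrix.of fun i j : Fin t =>
    if h : (i : ℕ) < m then
      (X (Sum.inl (⟨(i : ℕ), h⟩, c j)) : MvPolynomial ((Fin m × Fin n) ⊕ σ) K)
    else 0)

/-- The diagonal monomial `x_{1 b₁} ⋯ x_{t b_t}`, viewed inside the polynomial ring with
variable set `(Fin m × Fin n) ⊕ σ`. -/
noncomputable def diagX (K : Type*) [Field K] (m n : ℕ) (σ : Type*) {t : ℕ}
    (c : Fin t → Fin n) : MvPolynomial ((Fin m × Fin n) ⊕ σ) K :=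
  ∏ j : Fin t,
    if h : (j : ℕ) < m then
      (X (Sum.inl (⟨(j : ℕ), h⟩, c j)) : MvPolynomial ((Fin m × Fin n) ⊕ σ) K)
    else 0

/-- Admissible column selections for a `t`-minor (or diagonal) of `X_t(a)`:
strictly increasing columns, all with (1-indexed) column number `≥ a`. -/
def NEcols (n t a : ℕ) (c : Fin t → Fin n) : Prop :=
  StrictMono c ∧ ∀ j, a ≤ (c j : ℕ) + 1

/-- A valid pair `(t,a)`: `1 ≤ t`, `1 ≤ a`, `t ≤ m`, `t + a ≤ n + 1`. -/
def ValidPair (m n : ℕ) (p : ℕ × ℕ) : Prop :=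
  1 ≤ p.1 ∧ 1 ≤ p.2 ∧ p.1 ≤ m ∧ p.1 + p.2 ≤ n + 1

/-- The index type of the Rees variables `T_{ta}`: valid pairs `(t,a)`. -/
def TAIdx (m n : ℕ) : Type := {p : ℕ × ℕ // ValidPair m n p}

/-- The ambient polynomial ring `R' = K[x_{ij}, T_{ta}]`. -/
abbrev ReesAmbient (K : Type*) [Field K] (m n : ℕ) :=
  MvPolynomial ((Fin m × Fin n) ⊕ TAIdx m n) K

/-- Index data for a presentation variable `z_{a,δ}`: a valid pair `(t,a)` together with
a `t`-minor `δ` of `X_t(a)` (given by its columns). -/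
structure ZData (m n : ℕ) where
  t : ℕ
  a : ℕ
  valid : ValidPair m n (t, a)
  c : Fin t → Fin n
  hc : NEcols n t a c

/-- The presentation polynomial ring `𝒮 = K[x_{ij}, z_{a,δ}]`. -/
abbrev PresRing (K : Type*) [Field K] (m n : ℕ) :=
  MvPolynomial ((Fin m × Fin n) ⊕ ZData m n) K

/-- The presentation map `Ψ : 𝒮 → R'`, `x_{ij} ↦ x_{ij}`, `z_{a,δ} ↦ in(δ) · T_{t a}`;
its image is the monomial multi-Rees algebra `𝓡_in`. -/
noncomputable def PsiMap (K : Type*) [Field K] (m n : ℕ) :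
    PresRing K m n →ₐ[K] ReesAmbient K m n :=
  aeval fun v => match v with
    | Sum.inl q => X (Sum.inl q)
    | Sum.inr z => diagX K m n (TAIdx m n) z.c * X (Sum.inr ⟨(z.t, z.a), z.valid⟩)

/-!
`Ψ` is a monomial map, so its kernel is spanned by the binomials `x^d - x^e` of monomials of `𝒮`
with the same image. Such a binomial is reduced to quadratic ones by induction on the degree: it
suffices to transform `d` and `e` by quadratic moves (replacing `u₁ u₂` by `v₁ v₂` with the same
image) until they share a variable, which then cancels.

If no `z`-variable occurs, `d` and `e` consist of the same `x`-variables. Otherwise pick the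
`T_{ta}` of the image with `a` maximal, and variables `z_{a,c}` of `d` and `z_{a,c'}` of `e`
carrying it. Let `ρ` be the last row in which `c` and `c'` differ, say `c ρ < c' ρ`. The entry
`x_{ρ, c' ρ}` of the image of `e` also lies in the image of `d`, so some variable `v` of `d`
contains it. If `v = x_{ρ, c' ρ}`, exchange it with `x_{ρ, c ρ}` inside `z_{a,c}`. If
`v = z_{a₂,c₂}`, replace the columns of the two minors in the rows `≤ ρ` by their pointwise
maximum and minimum: both stay strictly increasing, the maximum has `c' ρ` in row `ρ`, and
`a₂ ≤ a` keeps the minimum a minor of `X_{t₂}(a₂)`. Either way `c` now agrees with `c'` from row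
`ρ` on, and descending through the rows makes the two variables equal.
-/

theorem Finsupp.single_one_add_tsub {α : Type*} {d : α →₀ ℕ} {v : α} (hv : d v ≠ 0) :
    Finsupp.single v 1 + (d - Finsupp.single v 1) = d :=
  add_tsub_cancel_of_le (Finsupp.single_le_iff.mpr (Nat.one_le_iff_ne_zero.mpr hv))

theorem Finsupp.exists_eq_add_single_add_single {α : Type*} {d : α →₀ ℕ} {u v : α}
    (hu : d u ≠ 0) (hv : d v ≠ 0) (huv : u ≠ v) :
    ∃ q, d = q + (Finsupp.single u 1 + Finsupp.single v 1) := by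
  classical
  refine ⟨d - (Finsupp.single u 1 + Finsupp.single v 1),
    (tsub_add_cancel_of_le (Finsupp.le_def.mpr fun x => ?_)).symm⟩
  simp only [Finsupp.add_apply, Finsupp.single_apply]
  split_ifs <;> subst_vars
  · exact absurd rfl huv
  all_goals omega

section
variable {R σ τ : Type*} [CommRing R]

theorem aeval_monomial_eq_monomial_linearCombination (w : σ → τ →₀ ℕ) (d : σ →₀ ℕ) (r : R) :
    aeval (fun v => monomial (w v) (1 : R)) (monomial d r) =
      monomial (Finsupp.linearCombination ℕ w d) r := by
  simp only [aeval_monomial, algebraMap_eq, Finsupp.prod, monomial_pow, one_pow,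
    ← monomial_sum_one, C_mul_monomial, mul_one, Finsupp.linearCombination_apply, Finsupp.sum]

theorem ker_aeval_monomial_le_span_binomials (w : σ → τ →₀ ℕ) :
    RingHom.ker (aeval (R := R) fun v => monomial (w v) (1 : R)) ≤
      Ideal.span {g | ∃ d e, Finsupp.linearCombination ℕ w d = Finsupp.linearCombination ℕ w e ∧
        g = monomial d 1 - monomial e 1} := by
  classical
  set F := Finsupp.linearCombination ℕ w
  set φ : MvPolynomial σ R →ₐ[R] MvPolynomial τ R := aeval fun v => monomial (w v) 1
  -- `L` sends `x^y` to a chosen `x^e` with `F e = y`, so `f - L (φ f)` is a sum of binomials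
  let L : MvPolynomial τ R → MvPolynomial σ R := AddMonoidAlgebra.mapDomain (Function.invFun F)
  have hL (y : τ →₀ ℕ) (c : R) : L (monomial y c) = monomial (Function.invFun F y) c := by
    simp only [L, ← single_eq_monomial, AddMonoidAlgebra.mapDomain_single]
  have key (f : MvPolynomial σ R) :
      f - L (φ f) ∈ Ideal.span {g | ∃ d e, F d = F e ∧ g = monomial d 1 - monomial e 1} := by
    induction f using MvPolynomial.induction_on' with
    | monomial d c =>
      rw [aeval_monomial_eq_monomial_linearCombination, hL, ← mul_one c, ← smul_eq_mul,
        ← smul_monomial, ← smul_monomial, ← smul_sub, smul_eq_C_mul]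
      refine Ideal.mul_mem_left _ (C c) (Ideal.subset_span ?_)
      exact ⟨d, _, (Function.invFun_eq (f := F) ⟨d, rfl⟩).symm, rfl⟩
    | add f g hf hg =>
      convert add_mem hf hg using 1
      rw [map_add, show L _ = L _ + L _ from AddMonoidAlgebra.mapDomain_add _ _ _]
      abel
  intro f hf
  have hφf : φ f = 0 := hf
  simpa [hφf, L] using key f

end

abbrev PresVar (m n : ℕ) := (Fin m × Fin n) ⊕ ZData m n
abbrev ReesVar (m n : ℕ) := (Fin m × Fin n) ⊕ TAIdx m n

namespace ZData
variable {m n : ℕ}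

def label (z : ZData m n) : TAIdx m n := ⟨(z.t, z.a), z.valid⟩

theorem t_le (z : ZData m n) : z.t ≤ m := z.valid.2.2.1

end ZData

section
variable {m n t : ℕ}

noncomputable def diagExp (htm : t ≤ m) (c : Fin t → Fin n) : ReesVar m n →₀ ℕ :=
  ∑ j, Finsupp.single (Sum.inl (Fin.castLE htm j, c j)) 1

theorem diagExp_inl (htm : t ≤ m) (c : Fin t → Fin n) (i : Fin m) (col : Fin n) :
    diagExp htm c (Sum.inl (i, col)) =
      if h : (i : ℕ) < t then (if c ⟨i, h⟩ = col then 1 else 0) else 0 := by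
  classical
  simp only [diagExp, Finsupp.finsetSum_apply, Finsupp.single_apply, Sum.inl.injEq,
    Prod.mk.injEq]
  by_cases h : (i : ℕ) < t
  · rw [dif_pos h, Finset.sum_eq_single ⟨i, h⟩]
    · simp [Fin.ext_iff]
    · intro j _ hj
      rw [if_neg]
      rintro ⟨hji, -⟩
      exact hj (Fin.ext (by simp [← hji]))
    · simp
  · refine (dif_neg h).symm ▸ Finset.sum_eq_zero fun j _ => if_neg ?_
    rintro ⟨hji, -⟩
    exact h (by simp [← hji])

theorem diagExp_inr (htm : t ≤ m) (c : Fin t → Fin n) (L : TAIdx m n) :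
    diagExp htm c (Sum.inr L) = 0 := by
  simp [diagExp, Finsupp.finsetSum_apply]

noncomputable def expOf : PresVar m n → ReesVar m n →₀ ℕ
  | Sum.inl q => Finsupp.single (Sum.inl q) 1
  | Sum.inr z => diagExp z.t_le z.c + Finsupp.single (Sum.inr z.label) 1

noncomputable abbrev expMap : (PresVar m n →₀ ℕ) →ₗ[ℕ] ReesVar m n →₀ ℕ :=
  Finsupp.linearCombination ℕ expOf

end

section
variable {K : Type*} [Field K] {m n : ℕ}

theorem psiMap_X (v : PresVar m n) : PsiMap K m n (X v) = monomial (expOf v) 1 := by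
  rw [PsiMap, aeval_X]
  rcases v with q | z
  · rfl
  · have hdiag : diagX K m n (TAIdx m n) z.c = monomial (diagExp z.t_le z.c) 1 := by
      rw [diagX, diagExp, monomial_sum_one]
      exact Finset.prod_congr rfl fun j _ => dif_pos (j.isLt.trans_le z.t_le)
    change diagX K m n (TAIdx m n) z.c * X (Sum.inr z.label) = _
    rw [hdiag, X, monomial_mul, mul_one]
    rfl

theorem psiMap_eq_aeval : PsiMap K m n = aeval fun v => monomial (expOf v) 1 :=
  algHom_ext fun v => by rw [psiMap_X, aeval_X]

theorem psiMap_monomial (d : PresVar m n →₀ ℕ) (r : K) :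
    PsiMap K m n (monomial d r) = monomial (expMap d) r := by
  rw [psiMap_eq_aeval, aeval_monomial_eq_monomial_linearCombination]

theorem expOf_le_expMap {d : PresVar m n →₀ ℕ} {v : PresVar m n} (hv : d v ≠ 0) :
    expOf v ≤ expMap d := by
  rw [← Finsupp.single_one_add_tsub hv, map_add, Finsupp.linearCombination_single, one_smul]
  exact le_self_add

theorem exists_expOf_ne_zero {d : PresVar m n →₀ ℕ} {y : ReesVar m n} (h : expMap d y ≠ 0) :
    ∃ v, d v ≠ 0 ∧ expOf v y ≠ 0 := by
  rw [Finsupp.linearCombination_apply, Finsupp.sum, Finsupp.finsetSum_apply] at h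
  obtain ⟨v, hv, hne⟩ := Finset.exists_ne_zero_of_sum_ne_zero h
  exact ⟨v, Finsupp.mem_support_iff.mp hv, fun h0 => hne (by simp [h0])⟩

variable (K m n) in
def quadBinomials : Set (PresRing K m n) :=
  {f | ∃ d e : PresVar m n →₀ ℕ, d.degree = 2 ∧ e.degree = 2 ∧
    PsiMap K m n (monomial d (1 : K)) = PsiMap K m n (monomial e (1 : K)) ∧
    f = monomial d (1 : K) - monomial e (1 : K)}

theorem span_quadBinomials_le_ker :
    Ideal.span (quadBinomials K m n) ≤
      RingHom.ker (PsiMap K m n : PresRing K m n →+* ReesAmbient K m n) := by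
  refine Ideal.span_le.mpr ?_
  rintro _ ⟨d, e, -, -, hde, rfl⟩
  exact RingHom.mem_ker.mpr (by simp [hde])

end

section
variable {K : Type*} [Field K] {m n : ℕ}

variable (K) in
def Linked (d e : PresVar m n →₀ ℕ) : Prop :=
  d.degree = e.degree ∧ monomial d (1 : K) - monomial e 1 ∈ Ideal.span (quadBinomials K m n)

namespace Linked
variable {d e f : PresVar m n →₀ ℕ}

@[refl] theorem refl (d : PresVar m n →₀ ℕ) : Linked K d d := ⟨rfl, by simp⟩

theorem symm (h : Linked K d e) : Linked K e d :=
  ⟨h.1.symm, by simpa using neg_mem h.2⟩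

theorem trans (h : Linked K d e) (h' : Linked K e f) : Linked K d f :=
  ⟨h.1.trans h'.1, by simpa using add_mem h.2 h'.2⟩

theorem add_left (h : Linked K d e) (q : PresVar m n →₀ ℕ) : Linked K (q + d) (q + e) := by
  refine ⟨by simp [h.1], ?_⟩
  rw [← one_mul (1 : K), ← monomial_mul, ← monomial_mul, ← mul_sub]
  exact Ideal.mul_mem_left _ _ h.2

theorem expMap_eq (h : Linked K d e) : expMap d = expMap e := by
  have hker := span_quadBinomials_le_ker h.2
  rw [RingHom.mem_ker] at hker
  simpa [psiMap_monomial, sub_eq_zero, monomial_eq_monomial_iff] using hker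

end Linked

theorem linked_of_expOf_add_eq {u₁ u₂ v₁ v₂ : PresVar m n}
    (h : expOf u₁ + expOf u₂ = expOf v₁ + expOf v₂) (q : PresVar m n →₀ ℕ) :
    Linked K (q + (Finsupp.single u₁ 1 + Finsupp.single u₂ 1))
      (q + (Finsupp.single v₁ 1 + Finsupp.single v₂ 1)) := by
  refine Linked.add_left ⟨by simp, Ideal.subset_span ⟨_, _, by simp, by simp, ?_, rfl⟩⟩ q
  simp [psiMap_monomial, map_add, h]

end

section
variable {m n t t₂ a : ℕ}

theorem necols_update {c : Fin t → Fin n} (hc : NEcols n t a c) {ρ : Fin t} {γ : Fin n}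
    (hργ : c ρ < γ) (hγ : ∀ j, ρ < j → γ < c j) (hγa : a ≤ γ + 1) :
    NEcols n t a (Function.update c ρ γ) := by
  refine ⟨fun i j hij => ?_, fun j => ?_⟩
  · simp only [Function.update_apply]
    split_ifs with hi hj hj
    · exact absurd (hi.trans hj.symm) hij.ne
    · exact hγ j (hi ▸ hij)
    · exact (hc.1 (hj ▸ hij)).trans hργ
    · exact hc.1 hij
  · rw [Function.update_apply]
    split_ifs
    · exact hγa
    · exact hc.2 j

def mergeBelow (f : Fin n → Fin n → Fin n) (ρ : ℕ) (hρ : ρ < t₂) (c : Fin t → Fin n)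
    (c₂ : Fin t₂ → Fin n) (j : Fin t) : Fin n :=
  if h : (j : ℕ) ≤ ρ then f (c j) (c₂ ⟨j, h.trans_lt hρ⟩) else c j

theorem strictMono_mergeBelow {f : Fin n → Fin n → Fin n}
    (hf : ∀ x y x' y', x < x' → y < y' → f x y < f x' y') {ρ : ℕ} (hρ : ρ < t₂)
    {c : Fin t → Fin n} {c₂ : Fin t₂ → Fin n} (hc : StrictMono c) (hc₂ : StrictMono c₂)
    (hbd : ∀ (i j : Fin t) (hi : (i : ℕ) ≤ ρ), ρ < j → f (c i) (c₂ ⟨i, hi.trans_lt hρ⟩) < c j) :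
    StrictMono (mergeBelow f ρ hρ c c₂) := by
  intro i j hij
  have hij' : (i : ℕ) < j := hij
  unfold mergeBelow
  split_ifs with hi hj hj
  · exact hf _ _ _ _ (hc hij) (hc₂ (Fin.mk_lt_mk.mpr hij'))
  · exact hbd i j hi (by omega)
  · omega
  · exact hc hij

theorem necols_mergeBelow_max {c : Fin t → Fin n} {c₂ : Fin t₂ → Fin n} (hc : NEcols n t a c)
    (hc₂ : StrictMono c₂) {ρ : ℕ} (hρ : ρ < t₂) (hγ : ∀ j : Fin t, ρ < j → c₂ ⟨ρ, hρ⟩ < c j) :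
    NEcols n t a (mergeBelow max ρ hρ c c₂) := by
  have hle (j : Fin t) : c j ≤ mergeBelow max ρ hρ c c₂ j := by
    unfold mergeBelow
    split_ifs
    exacts [le_max_left _ _, le_rfl]
  refine ⟨strictMono_mergeBelow (fun _ _ _ _ => max_lt_max) hρ hc.1 hc₂ ?_, fun j => ?_⟩
  · intro i j hi hj
    exact max_lt (hc.1 (by simp only [Fin.lt_def]; omega))
      ((hc₂.monotone (Fin.mk_le_mk.mpr hi)).trans_lt (hγ j hj))
  · have := hc.2 j
    have : (c j : ℕ) ≤ mergeBelow max ρ hρ c c₂ j := hle j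
    omega

theorem necols_mergeBelow_min {a₂ : ℕ} {c₂ : Fin t₂ → Fin n} {c : Fin t → Fin n}
    (hc₂ : NEcols n t₂ a₂ c₂) (hc : NEcols n t a c) (ha : a₂ ≤ a) {ρ : ℕ} (hρ : ρ < t) :
    NEcols n t₂ a₂ (mergeBelow min ρ hρ c₂ c) := by
  refine ⟨strictMono_mergeBelow (fun _ _ _ _ => min_lt_min) hρ hc₂.1 hc.1 ?_, fun j => ?_⟩
  · intro i j _ hj
    exact (min_le_left _ _).trans_lt (hc₂.1 (by simp only [Fin.lt_def]; omega))
  · have := hc₂.2 j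
    unfold mergeBelow
    split_ifs with h
    · have := hc.2 ⟨j, h.trans_lt hρ⟩
      rcases min_choice (c₂ j) (c ⟨j, h.trans_lt hρ⟩) with h' | h' <;> rw [h'] <;> omega
    · omega

end

section
variable {m n t t₂ : ℕ}

theorem diagExp_add_single_eq_update (htm : t ≤ m) (c : Fin t → Fin n) (ρ : Fin t)
    (γ : Fin n) :
    diagExp htm c + Finsupp.single (Sum.inl (Fin.castLE htm ρ, γ)) 1 =
      diagExp htm (Function.update c ρ γ) +
        Finsupp.single (Sum.inl (Fin.castLE htm ρ, c ρ)) 1 := by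
  classical
  ext (⟨i, col⟩ | L)
  · by_cases hi : Fin.castLE htm ρ = i
    · subst hi
      simp [diagExp_inl, Finsupp.single_apply]
      split_ifs <;> omega
    · have hne (h : (i : ℕ) < t) : (⟨i, h⟩ : Fin t) ≠ ρ := fun e => hi (Fin.ext (by simp [← e]))
      simp [diagExp_inl, hi, hne]
  · simp [diagExp_inr]

theorem diagExp_add_diagExp_eq_max_min (htm : t ≤ m) (htm₂ : t₂ ≤ m) {ρ : ℕ} (hρ : ρ < t)
    (hρ₂ : ρ < t₂) (c : Fin t → Fin n) (c₂ : Fin t₂ → Fin n) :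
    diagExp htm c + diagExp htm₂ c₂ =
      diagExp htm (mergeBelow max ρ hρ₂ c c₂) + diagExp htm₂ (mergeBelow min ρ hρ c₂ c) := by
  ext (⟨i, col⟩ | L)
  · simp only [Finsupp.add_apply, diagExp_inl, mergeBelow]
    by_cases hi : (i : ℕ) ≤ ρ
    · rw [dif_pos (hi.trans_lt hρ), dif_pos (hi.trans_lt hρ₂), dif_pos (hi.trans_lt hρ),
        dif_pos (hi.trans_lt hρ₂), dif_pos hi, dif_pos hi]
      rcases le_total (c ⟨i, hi.trans_lt hρ⟩) (c₂ ⟨i, hi.trans_lt hρ₂⟩) with h | h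
      · rw [max_eq_right h, min_eq_right h, add_comm]
      · rw [max_eq_left h, min_eq_left h]
    · simp only [dif_neg hi]
  · simp [diagExp_inr]

end

section
variable {m n t a : ℕ} {hv : ValidPair m n (t, a)} {c : Fin t → Fin n} {ρ : Fin t} {γ : Fin n}

def ExchangeTo (hv : ValidPair m n (t, a)) (c : Fin t → Fin n) (hc : NEcols n t a c) (ρ : Fin t)
    (γ : Fin n) (v : PresVar m n) : Prop :=
  ∃ (c' : Fin t → Fin n) (hc' : NEcols n t a c') (v' : PresVar m n),
    expOf (Sum.inr ⟨t, a, hv, c, hc⟩) + expOf v =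
      expOf (Sum.inr ⟨t, a, hv, c', hc'⟩) + expOf v' ∧
    c' ρ = γ ∧ ∀ j, ρ < j → c' j = c j

theorem exchangeTo_inl (hc : NEcols n t a c) (hργ : c ρ < γ) (hγ : ∀ j, ρ < j → γ < c j)
    (hγa : a ≤ γ + 1) : ExchangeTo hv c hc ρ γ (Sum.inl (Fin.castLE hv.2.2.1 ρ, γ)) := by
  classical
  refine ⟨_, necols_update hc hργ hγ hγa, Sum.inl (Fin.castLE hv.2.2.1 ρ, c ρ), ?_,
    Function.update_self _ _ _, fun j hj => Function.update_of_ne hj.ne' _ _⟩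
  simp only [expOf]
  rw [add_right_comm, diagExp_add_single_eq_update, add_right_comm]
  rfl

theorem exchangeTo_inr (hc : NEcols n t a c) (hργ : c ρ < γ) (hγ : ∀ j, ρ < j → γ < c j)
    {z₂ : ZData m n} (hcov : expOf (Sum.inr z₂) (Sum.inl (Fin.castLE hv.2.2.1 ρ, γ)) ≠ 0)
    (ha : z₂.a ≤ a) : ExchangeTo hv c hc ρ γ (Sum.inr z₂) := by
  obtain ⟨t₂, a₂, hv₂, c₂, hc₂⟩ := z₂
  simp only [expOf, Finsupp.add_apply, diagExp_inl] at hcov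
  obtain ⟨hρ₂, hγ₂⟩ : ∃ hρ₂ : (ρ : ℕ) < t₂, c₂ ⟨ρ, hρ₂⟩ = γ := by
    split_ifs at hcov with h h'
    · exact ⟨h, h'⟩
    all_goals simp at hcov
  refine ⟨_, necols_mergeBelow_max hc hc₂.1 hρ₂ fun j hj => hγ₂ ▸ hγ j hj,
    Sum.inr ⟨t₂, a₂, hv₂, _, necols_mergeBelow_min hc₂ hc ha ρ.isLt⟩, ?_, ?_, ?_⟩
  · simp only [expOf]
    rw [add_add_add_comm, diagExp_add_diagExp_eq_max_min, add_add_add_comm]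
    rfl
  · simp [mergeBelow, hγ₂, hργ.le]
  · intro j hj
    simp [mergeBelow, not_le.mpr (Fin.lt_def.mp hj)]

end
section
variable {K : Type*} [Field K] {m n t a : ℕ} {hv : ValidPair m n (t, a)} {c : Fin t → Fin n}
  {ρ : Fin t} {γ : Fin n}

theorem expOf_inr_label (z : ZData m n) : expOf (Sum.inr z) (Sum.inr z.label) = 1 := by
  simp [expOf, diagExp_inr]

theorem expOf_inr_diag (z : ZData m n) (j : Fin z.t) :
    expOf (Sum.inr z) (Sum.inl (Fin.castLE z.t_le j, z.c j)) = 1 := by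
  simp [expOf, diagExp_inl]

theorem expMap_ne_zero_of_expOf {d : PresVar m n →₀ ℕ} {v : PresVar m n} {y : ReesVar m n}
    (hv : d v ≠ 0) (hy : expOf v y ≠ 0) : expMap d y ≠ 0 :=
  fun h => hy (Nat.eq_zero_of_le_zero (h ▸ expOf_le_expMap hv y))

theorem exchangeTo_of_expOf_ne_zero (hc : NEcols n t a c) (hργ : c ρ < γ)
    (hγ : ∀ j, ρ < j → γ < c j) (hγa : a ≤ γ + 1) {v : PresVar m n}
    (hcov : expOf v (Sum.inl (Fin.castLE hv.2.2.1 ρ, γ)) ≠ 0)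
    (ha : ∀ z₂ : ZData m n, v = Sum.inr z₂ → z₂.a ≤ a) : ExchangeTo hv c hc ρ γ v := by
  classical
  rcases v with q | z₂
  · obtain rfl : q = (Fin.castLE hv.2.2.1 ρ, γ) := by
      by_contra h
      simp [expOf, Ne.symm h] at hcov
    exact exchangeTo_inl hc hργ hγ hγa
  · exact exchangeTo_inr hc hργ hγ hcov (ha z₂ rfl)

theorem exists_linked_raise_column {d : PresVar m n →₀ ℕ} (hc : NEcols n t a c)
    (hz : d (Sum.inr ⟨t, a, hv, c, hc⟩) ≠ 0)
    (hmax : ∀ L : TAIdx m n, expMap d (Sum.inr L) ≠ 0 → L.1.2 ≤ a)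
    (hργ : c ρ < γ) (hγ : ∀ j, ρ < j → γ < c j) (hγa : a ≤ γ + 1)
    (hcov : expMap d (Sum.inl (Fin.castLE hv.2.2.1 ρ, γ)) ≠ 0) :
    ∃ (c' : Fin t → Fin n) (hc' : NEcols n t a c') (d' : PresVar m n →₀ ℕ),
      Linked K d d' ∧ d' (Sum.inr ⟨t, a, hv, c', hc'⟩) ≠ 0 ∧ c' ρ = γ ∧
        ∀ j, ρ < j → c' j = c j := by
  obtain ⟨v, hvd, hvcov⟩ := exists_expOf_ne_zero hcov
  have hvz : Sum.inr ⟨t, a, hv, c, hc⟩ ≠ v := by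
    rintro rfl
    simp [expOf, diagExp_inl, hργ.ne] at hvcov
  have ha (z₂ : ZData m n) (h : v = Sum.inr z₂) : z₂.a ≤ a :=
    hmax z₂.label (expMap_ne_zero_of_expOf hvd (h ▸ (expOf_inr_label z₂).trans_ne one_ne_zero))
  obtain ⟨c', hc', v', hexp, hρ, habove⟩ :=
    exchangeTo_of_expOf_ne_zero hc hργ hγ hγa hvcov ha
  obtain ⟨q, rfl⟩ := Finsupp.exists_eq_add_single_add_single hz hvd hvz
  exact ⟨c', hc', _, linked_of_expOf_add_eq hexp q, by simp, hρ, habove⟩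

end

section
variable {K : Type*} [Field K] {m n : ℕ}

variable (K) in
def LinkedToCommon (d e : PresVar m n →₀ ℕ) : Prop :=
  ∃ w d₁ e₁, Linked K d (Finsupp.single w 1 + d₁) ∧ Linked K e (Finsupp.single w 1 + e₁)

namespace LinkedToCommon
variable {d d' e : PresVar m n →₀ ℕ}

theorem symm (h : LinkedToCommon K d e) : LinkedToCommon K e d :=
  let ⟨w, d₁, e₁, hd, he⟩ := h
  ⟨w, e₁, d₁, he, hd⟩

theorem of_linked_left (h : Linked K d d') (h' : LinkedToCommon K d' e) : LinkedToCommon K d e :=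
  let ⟨w, d₁, e₁, hd, he⟩ := h'
  ⟨w, d₁, e₁, h.trans hd, he⟩

theorem of_ne_zero {w : PresVar m n} (hd : d w ≠ 0) (he : e w ≠ 0) : LinkedToCommon K d e :=
  ⟨w, d - Finsupp.single w 1, e - Finsupp.single w 1, by rw [Finsupp.single_one_add_tsub hd],
    by rw [Finsupp.single_one_add_tsub he]⟩

end LinkedToCommon

theorem linkedToCommon_of_agree_from {t a : ℕ} {hv : ValidPair m n (t, a)} (r : ℕ)
    {d e : PresVar m n →₀ ℕ} {c c' : Fin t → Fin n} {hc : NEcols n t a c}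
    {hc' : NEcols n t a c'} (hd : d (Sum.inr ⟨t, a, hv, c, hc⟩) ≠ 0)
    (he : e (Sum.inr ⟨t, a, hv, c', hc'⟩) ≠ 0) (hde : expMap d = expMap e)
    (hmax : ∀ L : TAIdx m n, expMap d (Sum.inr L) ≠ 0 → L.1.2 ≤ a)
    (hagree : ∀ j : Fin t, r ≤ j → c j = c' j) : LinkedToCommon K d e := by
  induction r generalizing d e c c' with
  | zero =>
    obtain rfl : c = c' := funext fun j => hagree j (Nat.zero_le _)
    exact LinkedToCommon.of_ne_zero hd he
  | succ r ih =>
    by_cases hr : r < t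
    swap
    · exact ih hd he hde hmax fun j hj => hagree j (by omega)
    set ρ : Fin t := ⟨r, hr⟩
    by_cases heq : c ρ = c' ρ
    · refine ih hd he hde hmax fun j hj => ?_
      rcases hj.eq_or_lt with hj | hj
      · exact (Fin.ext hj.symm : j = ρ) ▸ heq
      · exact hagree j hj
    wlog hlt : c ρ < c' ρ generalizing d e c c'
    · exact (this he hd hde.symm (hde ▸ hmax) (fun j hj => (hagree j hj).symm) (Ne.symm heq)
        ((not_lt.mp hlt).lt_of_ne (Ne.symm heq))).symm
    have hcov : expMap d (Sum.inl (Fin.castLE hv.2.2.1 ρ, c' ρ)) ≠ 0 :=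
      hde ▸ expMap_ne_zero_of_expOf he
        ((expOf_inr_diag ⟨t, a, hv, c', hc'⟩ ρ).trans_ne one_ne_zero)
    have hγ (j : Fin t) (hj : ρ < j) : c' ρ < c j := hagree j hj ▸ hc'.1 hj
    obtain ⟨c₃, hc₃, d', hdd', hd', hρ, habove⟩ :=
      exists_linked_raise_column (K := K) hc hd hmax hlt hγ (hc'.2 ρ) hcov
    refine (ih hd' he (hdd'.expMap_eq.symm.trans hde) (hdd'.expMap_eq ▸ hmax)
      fun j hj => ?_).of_linked_left hdd'
    rcases hj.eq_or_lt with hj | hj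
    · exact (Fin.ext hj.symm : j = ρ) ▸ hρ
    · exact (habove j hj).trans (hagree j hj)

end

section
variable {K : Type*} [Field K] {m n : ℕ}

theorem exists_label_eq_of_expMap_inr_ne_zero {d : PresVar m n →₀ ℕ} {L : TAIdx m n}
    (h : expMap d (Sum.inr L) ≠ 0) : ∃ z : ZData m n, d (Sum.inr z) ≠ 0 ∧ z.label = L := by
  classical
  obtain ⟨v, hv, hvL⟩ := exists_expOf_ne_zero h
  rcases v with q | z
  · simp [expOf] at hvL
  · refine ⟨z, hv, by_contra fun hzL => hvL ?_⟩
    simp [expOf, diagExp_inr, hzL]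

theorem exists_maximal_label {d : PresVar m n →₀ ℕ} {L₀ : TAIdx m n}
    (h : expMap d (Sum.inr L₀) ≠ 0) :
    ∃ L : TAIdx m n, expMap d (Sum.inr L) ≠ 0 ∧
      ∀ L' : TAIdx m n, expMap d (Sum.inr L') ≠ 0 → L'.1.2 ≤ L.1.2 := by
  obtain ⟨L, hL, hmax⟩ :=
    ((expMap d).support.preimage Sum.inr Sum.inr_injective.injOn).exists_max_image
      (fun L : TAIdx m n => L.1.2) ⟨L₀, by simpa using h⟩
  exact ⟨L, by simpa using hL, fun L' hL' => hmax L' (by simpa using hL')⟩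

theorem linkedToCommon_of_expMap_eq {d e : PresVar m n →₀ ℕ} (hde : expMap d = expMap e)
    (hd : d ≠ 0) : LinkedToCommon K d e := by
  by_cases hz : ∃ L : TAIdx m n, expMap d (Sum.inr L) ≠ 0
  · obtain ⟨L, hL, hLmax⟩ := exists_maximal_label hz.choose_spec
    obtain ⟨⟨t, a, hv, c, hc⟩, hzd, rfl⟩ := exists_label_eq_of_expMap_inr_ne_zero hL
    obtain ⟨⟨t', a', hv', c', hc'⟩, hze, hlabel⟩ :=
      exists_label_eq_of_expMap_inr_ne_zero (hde ▸ hL)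
    obtain ⟨rfl, rfl⟩ := Prod.mk.inj (congrArg Subtype.val hlabel)
    exact linkedToCommon_of_agree_from _ hzd hze hde hLmax
      fun j hj => absurd j.isLt (not_lt.mpr hj)
  · push Not at hz
    obtain ⟨v, hv⟩ := Finsupp.ne_iff.mp hd
    rcases v with q | z
    · obtain ⟨u, hu, hucov⟩ := exists_expOf_ne_zero
        (hde ▸ expMap_ne_zero_of_expOf (y := Sum.inl q) hv (by simp [expOf]))
      rcases u with q' | z'
      · obtain rfl : q' = q := by
          by_contra h
          simp [expOf, h] at hucov
        exact LinkedToCommon.of_ne_zero hv hu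
      · exact absurd (hz z'.label) (hde ▸ expMap_ne_zero_of_expOf hu
          ((expOf_inr_label z').trans_ne one_ne_zero))
    · exact absurd (hz z.label) (expMap_ne_zero_of_expOf hv
        ((expOf_inr_label z).trans_ne one_ne_zero))

theorem eq_zero_of_expMap_eq_zero {e : PresVar m n →₀ ℕ} (he : expMap e = 0) : e = 0 := by
  ext v
  by_contra hv
  rcases v with q | z
  · exact expMap_ne_zero_of_expOf hv (y := Sum.inl q) (by simp [expOf]) (by simp [he])
  · exact expMap_ne_zero_of_expOf hv ((expOf_inr_label z).trans_ne one_ne_zero) (by simp [he])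

theorem linked_of_expMap_eq {d e : PresVar m n →₀ ℕ} (hde : expMap d = expMap e) :
    Linked K d e := by
  induction hk : d.degree using Nat.strong_induction_on generalizing d e with
  | _ k ih =>
  by_cases hd : d = 0
  · subst hd
    rw [eq_zero_of_expMap_eq_zero (hde.symm.trans (map_zero _))]
  obtain ⟨w, d₁, e₁, hdw, hew⟩ := linkedToCommon_of_expMap_eq (K := K) hde hd
  have hexp : expMap d₁ = expMap e₁ := by
    have := hdw.expMap_eq.symm.trans (hde.trans hew.expMap_eq)
    rwa [map_add, map_add, add_right_inj] at this
  have hdeg : d₁.degree < k := by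
    have := hdw.1
    rw [map_add, Finsupp.degree_single] at this
    omega
  exact hdw.trans (((ih _ hdeg hexp rfl).add_left _).trans hew.symm)

end

theorem ker_PsiMap_generated_by_quadratic_binomials_general (K : Type*) [Field K] (m n : ℕ) :
    RingHom.ker (PsiMap K m n : PresRing K m n →+* ReesAmbient K m n) =
      Ideal.span {f | ∃ d e : ((Fin m × Fin n) ⊕ ZData m n) →₀ ℕ,
        (d.sum fun _ k => k) = 2 ∧ (e.sum fun _ k => k) = 2 ∧
        PsiMap K m n (monomial d (1 : K)) = PsiMap K m n (monomial e (1 : K)) ∧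
        f = monomial d (1 : K) - monomial e (1 : K)} := by
  change _ = Ideal.span (quadBinomials K m n)
  refine le_antisymm ?_ span_quadBinomials_le_ker
  rw [psiMap_eq_aeval]
  refine (ker_aeval_monomial_le_span_binomials expOf).trans (Ideal.span_le.mpr ?_)
  rintro _ ⟨d, e, hde, rfl⟩
  exact (linked_of_expMap_eq hde).2

/-- The kernel of `Ψ` is generated by homogeneous binomials of degree
`2`: elements `Z₁ - Z₂` with `Z₁, Z₂` degree-2 monomials of `𝒮` such that
`Ψ(Z₁) = Ψ(Z₂)`. -/
theorem ker_PsiMap_generated_by_quadratic_binomials (K : Type*) [Field K] (m n : ℕ)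
    (hm : 1 ≤ m) (hmn : m ≤ n) :
    RingHom.ker (PsiMap K m n : PresRing K m n →+* ReesAmbient K m n) =
      Ideal.span {f | ∃ d e : ((Fin m × Fin n) ⊕ ZData m n) →₀ ℕ,
        (d.sum fun _ k => k) = 2 ∧ (e.sum fun _ k => k) = 2 ∧
        PsiMap K m n (monomial d (1 : K)) = PsiMap K m n (monomial e (1 : K)) ∧
        f = monomial d (1 : K) - monomial e (1 : K)} :=
  ker_PsiMap_generated_by_quadratic_binomials_general K m n
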